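/- If a finite category C has skeletal Möbius inversion with ν_C the inverse of ζ_C in the corner algebra, then C has Euler characteristic equal to the sum of all values of ν_C: χ(C) = Σ_{x,y ∈ Obj(C)} ν_C(x,y). -/

import Mathlib

/-!
Let `k` and `k'` be the row and column sums of `ν`. Summing `ζ ν = e` over columns turns it
into the weighting equation for `k`, and summing `ν ζ = e` over rows gives the coweighting
equation for `k'`, because every row and every column of `e` sums to `1`: the nonzero entries
of the row of `x` are the `|[x]|` entries `1 / |[x]|` indexed by the isomorphism class of `x`,
and `e` is symmetric. Both `Σ k` and `Σ k'` are the total sum of `ν`.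
-/

open CategoryTheory
open scoped Classical

universe u v

/-- Convolution product on the Möbius algebra of rational-valued functions
on pairs of objects of a finite category. -/
noncomputable def conv (C : Type u) [Category.{v} C] [Fintype C]
    (α β : C → C → ℚ) : C → C → ℚ :=
  fun x y => ∑ z : C, α x z * β z y

/-- The size of the isomorphism class of an object. -/
noncomputable def isoCard (C : Type u) [Category.{v} C] [Fintype C] (x : C) : ℚ :=
  ((Finset.univ.filter fun z : C => Nonempty (x ≅ z)).card : ℚ)

/-- The idempotent `e_C` : `e_C(x,y) = 1/|[x]|` if `x ≅ y`, and `0` otherwise. -/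
noncomputable def eFun (C : Type u) [Category.{v} C] [Fintype C] : C → C → ℚ :=
  fun x y => if Nonempty (x ≅ y) then 1 / isoCard C x else 0

/-- The zeta function of a finite category: `ζ_C(x,y) = |C(x,y)|`. -/
noncomputable def zeta (C : Type u) [Category.{v} C] [Fintype C]
    [∀ x y : C, Fintype (x ⟶ y)] : C → C → ℚ :=
  fun x y => (Fintype.card (x ⟶ y) : ℚ)

/-- The Kronecker delta, the multiplicative identity of the Möbius algebra. -/
noncomputable def delta (C : Type u) [Category.{v} C] [Fintype C] : C → C → ℚ :=
  fun x y => if x = y then 1 else 0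

/-- A weighting on a finite category: `Σ_y |C(x,y)| k(y) = 1` for all `x`. -/
def Weighting (C : Type u) [Category.{v} C] [Fintype C]
    [∀ x y : C, Fintype (x ⟶ y)] (k : C → ℚ) : Prop :=
  ∀ x : C, ∑ y : C, zeta C x y * k y = 1

/-- A coweighting on a finite category: `Σ_x k(x) |C(x,y)| = 1` for all `y`. -/
def Coweighting (C : Type u) [Category.{v} C] [Fintype C]
    [∀ x y : C, Fintype (x ⟶ y)] (k : C → ℚ) : Prop :=
  ∀ y : C, ∑ x : C, k x * zeta C x y = 1

section MoebiusAlgebra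

variable (C : Type u) [Category.{v} C] [Fintype C]

lemma isoCard_pos (x : C) : 0 < isoCard C x := by
  have hx : x ∈ Finset.univ.filter fun z : C => Nonempty (x ≅ z) := by
    simpa using ⟨Iso.refl x⟩
  unfold isoCard
  exact_mod_cast Finset.card_pos.mpr ⟨x, hx⟩

variable {C} in
lemma isoCard_eq_of_iso {x y : C} (i : x ≅ y) : isoCard C x = isoCard C y := by
  unfold isoCard
  congr 2
  ext z
  simp only [Finset.mem_filter, Finset.mem_univ, true_and]
  exact ⟨fun ⟨j⟩ => ⟨i.symm ≪≫ j⟩, fun ⟨j⟩ => ⟨i ≪≫ j⟩⟩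

lemma eFun_comm (x y : C) : eFun C x y = eFun C y x := by
  unfold eFun
  by_cases h : Nonempty (x ≅ y)
  · obtain ⟨i⟩ := h
    rw [if_pos ⟨i⟩, if_pos ⟨i.symm⟩, isoCard_eq_of_iso i]
  · rw [if_neg h, if_neg fun ⟨i⟩ => h ⟨i.symm⟩]

lemma sum_eFun_right (x : C) : ∑ y : C, eFun C x y = 1 := by
  unfold eFun
  rw [← Finset.sum_filter, Finset.sum_const, nsmul_eq_mul]
  exact mul_one_div_cancel (isoCard_pos C x).ne'

lemma sum_eFun_left (y : C) : ∑ x : C, eFun C x y = 1 := by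
  simpa only [eFun_comm C _ y] using sum_eFun_right C y

lemma sum_conv_right (α β : C → C → ℚ) (x : C) :
    ∑ y : C, conv C α β x y = ∑ z : C, α x z * ∑ y : C, β z y := by
  simp only [conv, Finset.mul_sum]
  exact Finset.sum_comm

lemma sum_conv_left (α β : C → C → ℚ) (y : C) :
    ∑ x : C, conv C α β x y = ∑ z : C, (∑ x : C, α x z) * β z y := by
  simp only [conv, Finset.sum_mul]
  exact Finset.sum_comm

variable [∀ x y : C, Fintype (x ⟶ y)]

lemma weighting_sum_right_of_zeta_conv {ν : C → C → ℚ} (h : conv C (zeta C) ν = eFun C) :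
    Weighting C fun x => ∑ y : C, ν x y := fun x => by
  rw [← sum_conv_right, h, sum_eFun_right]

lemma coweighting_sum_left_of_conv_zeta {ν : C → C → ℚ} (h : conv C ν (zeta C) = eFun C) :
    Coweighting C fun y => ∑ x : C, ν x y := fun y => by
  rw [← sum_conv_left, h, sum_eFun_left]

end MoebiusAlgebra

/-- if `C` has skeletal Möbius inversion with inverse `ν_C` of
`ζ_C` in the corner algebra, then `C` has Euler characteristic (it admits a
weighting and a coweighting) equal to the sum of all values of `ν_C`. -/
theorem euler_char_eq_sum_nu (C : Type u) [Category.{v} C] [Fintype C]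
    [∀ x y : C, Fintype (x ⟶ y)] (ν : C → C → ℚ)
    (hcorner : conv C (eFun C) (conv C ν (eFun C)) = ν)
    (hl : conv C (zeta C) ν = eFun C) (hr : conv C ν (zeta C) = eFun C) :
    ∃ k k' : C → ℚ, Weighting C k ∧ Coweighting C k' ∧
      (∑ x : C, k x) = ∑ x : C, ∑ y : C, ν x y ∧
      (∑ x : C, k' x) = ∑ x : C, ∑ y : C, ν x y :=
  ⟨_, _, weighting_sum_right_of_zeta_conv C hl, coweighting_sum_left_of_conv_zeta C hr, rfl,
    Finset.sum_comm⟩
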